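/- arXiv:0802.2998 — 3 statements merged into one kernel-verified Lean document; each statement's English description precedes it below -/
import Mathlib

section
/- Let d ≥ 2 and 1 < α < 2. Let Γ be a finite Borel measure on the unit sphere S_{2d} of ℝ^{2d}, invariant under s ↦ −s, and identify a point of S_{2d} with (s_1,…,s_d) ∈ ℂ^d via s_j = s_j¹ + i s_j². Define φ : ℂ^d → ℝ by φ(θ₁,…,θ_d) = ∫_{S_{2d}} cos(Re(Σ_{j=1}^d θ_j · conj(s_j))) dΓ(s). For θ_j = θ_j¹ + i θ_j², let D_j = ∂/∂θ_j¹ + i ∂/∂θ_j² act on φ viewed as a function of the 2d real variables. Assume that for all indices i, j, k ∈ {1,…,d} that are not all equal, D_i D_j D_k φ vanishes identically on ℂ^d. Then for every i₀ ∈ {1,…,d} and all θ₁,…,θ_d ∈ ℂ: ∫_{S_{2d}} s_{i₀} · (Σ_{j=1}^d θ_j s_j)^{<α−1>} dΓ(s) = Σ_{j=1}^d ∫_{S_{2d}} s_{i₀} · (θ_j s_j)^{<α−1>} dΓ(s). -/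
open MeasureTheory Real

/-- Signed power of a complex number: `z^{<β>} = |z|^{β-1} * conj z` (with `0^{<β>} = 0`). -/
noncomputable def cspow (z : ℂ) (β : ℝ) : ℂ := ((‖z‖ ^ (β - 1) : ℝ) : ℂ) * (starRingEnd ℂ) z

/-- The operator `D_j = ∂/∂θ_j¹ + i ∂/∂θ_j²` acting in the `j`-th complex coordinate,
where `θ_j = θ_j¹ + i θ_j²`. -/
noncomputable def Dop {d : ℕ} (j : Fin d) (f : (Fin d → ℂ) → ℂ) : (Fin d → ℂ) → ℂ :=
  fun θ => deriv (fun t : ℝ => f (Function.update θ j (θ j + t))) 0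
    + Complex.I * deriv (fun t : ℝ => f (Function.update θ j (θ j + t * Complex.I))) 0

/-!
Write `u(θ, s) = Re ∑ θ_j conj(s_j)`. Since `D_j exp(i u(θ, s)) = i s_j exp(i u(θ, s))`, and `Γ` is
symmetric so that `φ(θ) = ∫ exp(i u(θ, s)) dΓ(s)`, the hypothesis on `D_i D_i D_k φ` says that the
complex measure `s_i² s_k dΓ(s)` has vanishing Fourier transform. By uniqueness of characteristic
functions `s_i² s_k = 0`, i.e. `s_i s_k = 0`, for `Γ`-a.e. `s` whenever `i ≠ k`: `Γ` is carried by
the coordinate axes. On an axis only one coordinate of `s` is nonzero, and both sides of the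
identity reduce to `∫ s_{i₀} (θ_{i₀} s_{i₀})^{<α-1>} dΓ(s)`.
-/

section FourierUniqueness

open Complex ComplexConjugate

variable {X : Type*} [MeasurableSpace X] {μ : Measure X}

theorem MeasureTheory.Integrable.exp_ofReal_mul_I_mul {a : X → ℝ} (ha : AEMeasurable a μ)
    {g : X → ℂ} (hg : Integrable g μ) : Integrable (fun x => exp (a x * I) * g x) μ :=
  hg.bdd_mul (by fun_prop) (.of_forall fun x => by rw [norm_exp_ofReal_mul_I])

theorem hasDerivAt_integral_exp_mul_I {a c : X → ℝ} {g : X → ℂ} (ha : AEMeasurable a μ)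
    (hc : AEMeasurable c μ) (hg : Integrable g μ) (hcg : Integrable (fun x => (c x : ℂ) * g x) μ)
    (t₀ : ℝ) :
    HasDerivAt (fun t : ℝ => ∫ x, exp ((a x + t * c x : ℝ) * I) * g x ∂μ)
      (∫ x, exp ((a x + t₀ * c x : ℝ) * I) * (I * (c x * g x)) ∂μ) t₀ := by
  have hpoint : ∀ x t, HasDerivAt (fun t : ℝ => exp ((a x + t * c x : ℝ) * I) * g x)
      (exp ((a x + t * c x : ℝ) * I) * (I * (c x * g x))) t := fun x t => by
    have := ((((hasDerivAt_id t).mul_const (c x)).const_add (a x)).ofReal_comp.mul_const I).cexp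
    simpa only [id, one_mul, mul_assoc, mul_left_comm _ I] using this.mul_const (g x)
  have hmeas : ∀ t : ℝ, AEMeasurable (fun x => a x + t * c x) μ := fun t => by fun_prop
  refine (hasDerivAt_integral_of_dominated_loc_of_deriv_le (s := Set.univ)
    (bound := fun x => ‖(c x : ℂ) * g x‖) Filter.univ_mem
    (.of_forall fun t => (hg.exp_ofReal_mul_I_mul (hmeas t)).1)
    (hg.exp_ofReal_mul_I_mul (hmeas t₀)) ((hcg.const_mul I).exp_ofReal_mul_I_mul (hmeas t₀)).1
    (.of_forall fun x t _ => ?_) hcg.norm (.of_forall fun x t _ => hpoint x t)).2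
  rw [norm_mul, norm_exp_ofReal_mul_I, one_mul, norm_mul I, norm_I, one_mul]

variable {E : Type*} [NormedAddCommGroup E] [NormedSpace ℝ E] [CompleteSpace E]
  [SecondCountableTopology E] [MeasurableSpace E] [BorelSpace E] {μ : Measure E}

theorem ae_eq_zero_of_forall_integral_exp_mul_real_eq_zero {f : E → ℝ} (hf : Integrable f μ)
    (h : ∀ L : StrongDual ℝ E, ∫ x, exp (L x * I) * f x ∂μ = 0) : f =ᵐ[μ] 0 := by
  have hchar : ∀ g : E → ℝ, Integrable g μ → ∀ L : StrongDual ℝ E,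
      charFunDual (μ.withDensity fun x => ENNReal.ofReal (g x)) L
        = ∫ x, exp (L x * I) * (max (g x) 0 : ℝ) ∂μ := fun g hg L => by
    rw [charFunDual_apply, integral_withDensity_eq_integral_toReal_smul₀
      hg.1.aemeasurable.ennreal_ofReal (.of_forall fun _ => ENNReal.ofReal_lt_top)]
    simp only [ENNReal.toReal_ofReal', real_smul, mul_comm]
  have hint : ∀ g : E → ℝ, Integrable g μ → ∀ L : StrongDual ℝ E,
      Integrable (fun x => exp (L x * I) * (max (g x) 0 : ℝ)) μ := fun g hg L =>
    hg.pos_part.ofReal.exp_ofReal_mul_I_mul (by fun_prop)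
  have := isFiniteMeasure_withDensity_ofReal hf.2
  have := isFiniteMeasure_withDensity_ofReal hf.fun_neg.2
  have heq : μ.withDensity (fun x => ENNReal.ofReal (f x))
      = μ.withDensity (fun x => ENNReal.ofReal (-f x)) := by
    refine Measure.ext_of_charFunDual (funext fun L => ?_)
    rw [hchar f hf, hchar _ hf.fun_neg, ← sub_eq_zero, ← integral_sub (hint f hf L)
      (hint _ hf.fun_neg L), ← h L]
    congr 1 with x
    rw [← mul_sub, ← ofReal_sub, max_zero_sub_max_neg_zero_eq_self]
  rw [withDensity_eq_iff hf.1.aemeasurable.ennreal_ofReal hf.fun_neg.1.aemeasurable.ennreal_ofReal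
    hf.lintegral_lt_top.ne] at heq
  filter_upwards [heq] with x hx
  rcases le_total (f x) 0 with hx0 | hx0
  · rw [ENNReal.ofReal_of_nonpos hx0, eq_comm, ENNReal.ofReal_eq_zero] at hx
    exact le_antisymm hx0 (neg_nonpos.1 hx)
  · rw [ENNReal.ofReal_of_nonpos (neg_nonpos.2 hx0), ENNReal.ofReal_eq_zero] at hx
    exact le_antisymm hx hx0

theorem ae_eq_zero_of_forall_integral_exp_mul_eq_zero {f : E → ℂ} (hf : Integrable f μ)
    (h : ∀ L : StrongDual ℝ E, ∫ x, exp (L x * I) * f x ∂μ = 0) : f =ᵐ[μ] 0 := by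
  have hf' : Integrable (fun x => conj (f x)) μ :=
    conjCLE.toContinuousLinearMap.integrable_comp hf
  have hint : ∀ L : StrongDual ℝ E, Integrable (fun x => exp (L x * I) * f x) μ := fun L =>
    hf.exp_ofReal_mul_I_mul (by fun_prop)
  have hint' : ∀ L : StrongDual ℝ E, Integrable (fun x => exp (L x * I) * conj (f x)) μ :=
    fun L => hf'.exp_ofReal_mul_I_mul (by fun_prop)
  have hconj : ∀ L : StrongDual ℝ E, ∫ x, exp (L x * I) * conj (f x) ∂μ = 0 := fun L => by
    have := congrArg conj (h (-L))
    rw [← integral_conj, map_zero] at this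
    rw [← this]
    congr 1 with x
    rw [map_mul, ← exp_conj]
    simp
  have hre : (fun x => (f x).re) =ᵐ[μ] 0 := by
    refine ae_eq_zero_of_forall_integral_exp_mul_real_eq_zero hf.re fun L => ?_
    simp_rw [re_eq_add_conj, mul_div_assoc', mul_add]
    rw [integral_div, integral_add (hint L) (hint' L), h, hconj, add_zero, zero_div]
  have him : (fun x => (f x).im) =ᵐ[μ] 0 := by
    refine ae_eq_zero_of_forall_integral_exp_mul_real_eq_zero hf.im fun L => ?_
    simp_rw [im_eq_sub_conj, mul_div_assoc', mul_sub]
    rw [integral_div, integral_sub (hint L) (hint' L), h, hconj, sub_zero, zero_div]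
  filter_upwards [hre, him] with x hxre hxim
  exact Complex.ext hxre hxim

end FourierUniqueness

section Pairing

open Complex ComplexConjugate

variable {d : ℕ}

def rePairing (θ s : Fin d → ℂ) : ℝ := (∑ j, θ j * conj (s j)).re

@[fun_prop]
theorem continuous_rePairing (θ : Fin d → ℂ) : Continuous (rePairing θ) := by
  unfold rePairing; fun_prop

theorem rePairing_neg_right (θ s : Fin d → ℂ) : rePairing θ (-s) = -rePairing θ s := by
  simp [rePairing, Finset.sum_neg_distrib]

theorem rePairing_update_add (θ s : Fin d → ℂ) (j : Fin d) (t : ℝ) (v : ℂ) :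
    rePairing (Function.update θ j (θ j + t * v)) s
      = rePairing θ s + t * (v * conj (s j)).re := by
  have : Function.update θ j (θ j + t * v) = θ + Pi.single j (t * v) := by
    ext k; rcases eq_or_ne k j with rfl | hk <;> simp [*]
  simp [this, rePairing, add_mul, Finset.sum_add_distrib, Pi.single_apply, mul_assoc]

theorem exists_rePairing_eq (L : StrongDual ℝ (Fin d → ℂ)) : ∃ θ, ⇑L = rePairing θ := by
  refine ⟨fun j => L (Pi.single j 1) + L (Pi.single j I) * I, funext fun s => ?_⟩
  have hsingle : ∀ j (z : ℂ),
      (Pi.single j z : Fin d → ℂ)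
        = z.re • (Pi.single j 1 : Fin d → ℂ) + z.im • (Pi.single j I : Fin d → ℂ) := fun j z => by
    rw [← Pi.single_smul', ← Pi.single_smul', ← Pi.single_add, real_smul, real_smul, mul_one,
      re_add_im]
  conv_lhs => rw [← Finset.univ_sum_single s]
  rw [map_sum, rePairing, re_sum]
  refine Finset.sum_congr rfl fun j _ => ?_
  rw [hsingle, map_add, map_smul, map_smul, smul_eq_mul, smul_eq_mul]
  simp [mul_re, mul_comm]

end Pairing

section CharFun

open Complex ComplexConjugate

variable {d : ℕ}

noncomputable def weightedCharFun (Γ : Measure (Fin d → ℂ)) (g : (Fin d → ℂ) → ℂ)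
    (θ : Fin d → ℂ) : ℂ :=
  ∫ s, exp (rePairing θ s * I) * g s ∂Γ

variable {Γ : Measure (Fin d → ℂ)} {g : (Fin d → ℂ) → ℂ} {j : Fin d}

theorem integrable_re_mul_conj_mul (hg : Integrable g Γ)
    (hgj : Integrable (fun s => s j * g s) Γ) (v : ℂ) :
    Integrable (fun s => ((v * conj (s j)).re : ℂ) * g s) Γ := by
  refine (hgj.norm.const_mul ‖v‖).mono' ?_ (.of_forall fun s => ?_)
  · have := hg.1.aemeasurable
    exact AEMeasurable.aestronglyMeasurable (by fun_prop)
  · rw [norm_mul, norm_mul, ← mul_assoc, norm_real, Real.norm_eq_abs]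
    gcongr
    exact (abs_re_le_norm _).trans (by simp)

theorem hasDerivAt_weightedCharFun_update (hg : Integrable g Γ)
    (hgj : Integrable (fun s => s j * g s) Γ) (θ : Fin d → ℂ) (v : ℂ) :
    HasDerivAt (fun t : ℝ => weightedCharFun Γ g (Function.update θ j (θ j + t * v)))
      (weightedCharFun Γ (fun s => I * ((v * conj (s j)).re * g s)) θ) 0 := by
  simp only [weightedCharFun, rePairing_update_add]
  simpa using hasDerivAt_integral_exp_mul_I (continuous_rePairing θ).aemeasurable
    (by fun_prop) hg (integrable_re_mul_conj_mul hg hgj v) 0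

theorem dop_weightedCharFun (hg : Integrable g Γ) (hgj : Integrable (fun s => s j * g s) Γ) :
    Dop j (weightedCharFun Γ g) = weightedCharFun Γ (fun s => I * s j * g s) := funext fun θ => by
  have hint : ∀ v : ℂ,
      Integrable (fun s => exp (rePairing θ s * I) * (I * ((v * conj (s j)).re * g s))) Γ :=
    fun v => ((integrable_re_mul_conj_mul hg hgj v).const_mul I).exp_ofReal_mul_I_mul (by fun_prop)
  have h1 := hasDerivAt_weightedCharFun_update hg hgj θ 1
  simp only [mul_one] at h1
  rw [Dop, h1.deriv, (hasDerivAt_weightedCharFun_update hg hgj θ I).deriv, weightedCharFun,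
    weightedCharFun, weightedCharFun, ← integral_const_mul,
    ← integral_add (hint 1) ((hint I).const_mul I)]
  congr with s
  simp only [one_mul, mul_re, I_re, I_im, conj_re, conj_im, zero_mul, zero_sub, neg_neg]
  linear_combination (I * exp (rePairing θ s * I) * g s) * re_add_im (s j)

end CharFun

section Moments

open Complex

variable {d : ℕ} {Γ : Measure (Fin d → ℂ)} {g : (Fin d → ℂ) → ℂ}

theorem ofReal_integral_cos_rePairing [IsFiniteMeasure Γ] [Γ.IsNegInvariant] (θ : Fin d → ℂ) :
    ((∫ s, Real.cos (rePairing θ s) ∂Γ : ℝ) : ℂ) = weightedCharFun Γ (fun _ => 1) θ := by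
  have hint : ∀ σ : ℝ, Integrable (fun s => exp ((σ * rePairing θ s : ℝ) * I)) Γ := fun σ => by
    simpa using (integrable_const (1 : ℂ)).exp_ofReal_mul_I_mul
      (a := fun s => σ * rePairing θ s) (by fun_prop)
  have hneg : ∫ s, exp ((1 * rePairing θ s : ℝ) * I) ∂Γ
      = ∫ s, exp ((-1 * rePairing θ s : ℝ) * I) ∂Γ := by
    rw [← integral_neg_eq_self]
    simp [rePairing_neg_right]
  calc ((∫ s, Real.cos (rePairing θ s) ∂Γ : ℝ) : ℂ)
      = ∫ s, (exp ((1 * rePairing θ s : ℝ) * I) + exp ((-1 * rePairing θ s : ℝ) * I)) / 2 ∂Γ := by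
        rw [← integral_complex_ofReal]
        congr with s
        simp [ofReal_cos, Complex.cos]
    _ = weightedCharFun Γ (fun _ => 1) θ := by
        rw [integral_div, integral_add (hint 1) (hint (-1)), ← hneg]
        simp [weightedCharFun]

theorem MeasureTheory.Integrable.const_mul_coord_mul (hbd : ∀ᵐ s ∂Γ, ∀ j, ‖s j‖ ≤ 1)
    (hg : Integrable g Γ) (c : ℂ) (j : Fin d) : Integrable (fun s => c * s j * g s) Γ :=
  hg.bdd_mul (Continuous.aestronglyMeasurable (by fun_prop)) (hbd.mono fun s hs => by
    simpa using mul_le_of_le_one_right (norm_nonneg c) (hs j))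

theorem dop_weightedCharFun_of_ae_norm_le_one (hbd : ∀ᵐ s ∂Γ, ∀ j, ‖s j‖ ≤ 1)
    (hg : Integrable g Γ) (j : Fin d) :
    Dop j (weightedCharFun Γ g) = weightedCharFun Γ (fun s => I * s j * g s) :=
  dop_weightedCharFun hg (by simpa using hg.const_mul_coord_mul hbd 1 j)

theorem dop_dop_dop_weightedCharFun_one [IsFiniteMeasure Γ] (hbd : ∀ᵐ s ∂Γ, ∀ j, ‖s j‖ ≤ 1)
    (i j k : Fin d) :
    Dop i (Dop j (Dop k (weightedCharFun Γ fun _ => 1)))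
      = weightedCharFun Γ (fun s => -I * (s i * s j * s k)) := by
  have h₀ : Integrable (fun _ => (1 : ℂ)) Γ := integrable_const 1
  have h₁ := h₀.const_mul_coord_mul hbd I k
  rw [dop_weightedCharFun_of_ae_norm_le_one hbd h₀, dop_weightedCharFun_of_ae_norm_le_one hbd h₁,
    dop_weightedCharFun_of_ae_norm_le_one hbd (h₁.const_mul_coord_mul hbd I j)]
  congr with s
  linear_combination (s i * s j * s k) * I_pow_three

theorem ae_eq_zero_of_weightedCharFun_eq_zero {w : (Fin d → ℂ) → ℂ} (hw : Integrable w Γ)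
    (h : ∀ θ, weightedCharFun Γ w θ = 0) : w =ᵐ[Γ] 0 :=
  ae_eq_zero_of_forall_integral_exp_mul_eq_zero hw fun L => by
    obtain ⟨θ, hθ⟩ := exists_rePairing_eq L
    simpa [hθ, weightedCharFun] using h θ

theorem ae_mul_eq_zero_of_dop_dop_dop_eq_zero [IsFiniteMeasure Γ]
    (hbd : ∀ᵐ s ∂Γ, ∀ j, ‖s j‖ ≤ 1)
    (h : ∀ i k : Fin d, i ≠ k →
      ∀ θ, Dop i (Dop i (Dop k (weightedCharFun Γ fun _ => 1))) θ = 0) :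
    ∀ᵐ s ∂Γ, ∀ i k, i ≠ k → s i * s k = 0 := by
  simp only [ae_all_iff, Filter.eventually_imp_distrib_left]
  intro i k hik
  have hint : Integrable (fun s => -I * (s i * s i * s k)) Γ :=
    .of_bound (Continuous.aestronglyMeasurable (by fun_prop)) 1 (hbd.mono fun s hs => by
      simpa using mul_le_one₀ (mul_le_one₀ (hs i) (norm_nonneg _) (hs i)) (norm_nonneg _) (hs k))
  have h0 := ae_eq_zero_of_weightedCharFun_eq_zero hint fun θ => by
    rw [← dop_dop_dop_weightedCharFun_one hbd]; exact h i k hik θ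
  filter_upwards [h0] with s hs
  simpa using hs

end Moments

theorem norm_le_one_of_sum_norm_sq_eq_one {d : ℕ} {s : Fin d → ℂ} (hs : ∑ j, ‖s j‖ ^ 2 = 1)
    (j : Fin d) : ‖s j‖ ≤ 1 :=
  (pow_le_one_iff_of_nonneg (norm_nonneg _) two_ne_zero).1 <|
    hs ▸ Finset.single_le_sum (fun k _ => sq_nonneg ‖s k‖) (Finset.mem_univ j)

theorem cspow_zero (β : ℝ) : cspow 0 β = 0 := by simp [cspow]

theorem mul_cspow_mul_eq_zero {a b : ℂ} (h : a * b = 0) (c : ℂ) (β : ℝ) :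
    a * cspow (c * b) β = 0 := by
  rcases mul_eq_zero.1 h with h | h <;> simp [h, cspow_zero]

theorem mul_cspow_sum_eq_of_mul_eq_zero {d : ℕ} {s : Fin d → ℂ} {i₀ : Fin d}
    (h : ∀ j, j ≠ i₀ → s i₀ * s j = 0) (θ : Fin d → ℂ) (β : ℝ) :
    s i₀ * cspow (∑ j, θ j * s j) β = s i₀ * cspow (θ i₀ * s i₀) β := by
  rcases eq_or_ne (s i₀) 0 with h0 | h0
  · simp [h0]
  · rw [Finset.sum_eq_single i₀ (fun j _ hj => by
      rw [(mul_eq_zero.1 (h j hj)).resolve_left h0, mul_zero]) (by simp)]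

theorem stmt1_general (d : ℕ) (α : ℝ)
    (Γ : Measure (Fin d → ℂ)) [IsFiniteMeasure Γ]
    (hsupp : Γ {s : Fin d → ℂ | ∑ j, ‖s j‖ ^ 2 = 1}ᶜ = 0)
    (hsym : Γ.map (fun s => -s) = Γ)
    (φ : (Fin d → ℂ) → ℝ)
    (hφ : ∀ θ, φ θ = ∫ s, Real.cos ((∑ j, θ j * (starRingEnd ℂ) (s j)).re) ∂Γ)
    (hvanish : ∀ i j k : Fin d, ¬(i = j ∧ j = k) →
      ∀ θ, Dop i (Dop j (Dop k (fun θ' => ((φ θ' : ℝ) : ℂ)))) θ = 0) :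
    ∀ (i₀ : Fin d) (θ : Fin d → ℂ),
      ∫ s, s i₀ * cspow (∑ j, θ j * s j) (α - 1) ∂Γ
        = ∑ j, ∫ s, s i₀ * cspow (θ j * s j) (α - 1) ∂Γ := by
  have : Γ.IsNegInvariant := ⟨hsym⟩
  have hbd : ∀ᵐ s ∂Γ, ∀ j, ‖s j‖ ≤ 1 :=
    Filter.Eventually.mono (mem_ae_iff.2 hsupp) fun s hs => norm_le_one_of_sum_norm_sq_eq_one hs
  have hφ' : (fun θ => ((φ θ : ℝ) : ℂ)) = weightedCharFun Γ fun _ => 1 :=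
    funext fun θ => by rw [hφ]; exact ofReal_integral_cos_rePairing θ
  have haxes := ae_mul_eq_zero_of_dop_dop_dop_eq_zero hbd fun i k hik =>
    hφ' ▸ hvanish i i k fun h => hik h.2
  intro i₀ θ
  rw [Finset.sum_eq_single i₀ (fun j _ hj => integral_eq_zero_of_ae <|
    haxes.mono fun s hs => mul_cspow_mul_eq_zero (hs i₀ j hj.symm) _ _) (by simp)]
  exact integral_congr_ae <| haxes.mono fun s hs =>
    mul_cspow_sum_eq_of_mul_eq_zero (fun j hj => hs i₀ j hj.symm) θ _

theorem stmt1 (d : ℕ) (hd : 2 ≤ d) (α : ℝ) (hα1 : 1 < α) (hα2 : α < 2)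
    (Γ : Measure (Fin d → ℂ)) [IsFiniteMeasure Γ]
    (hsupp : Γ {s : Fin d → ℂ | ∑ j, ‖s j‖ ^ 2 = 1}ᶜ = 0)
    (hsym : Γ.map (fun s => -s) = Γ)
    (φ : (Fin d → ℂ) → ℝ)
    (hφ : ∀ θ, φ θ = ∫ s, Real.cos ((∑ j, θ j * (starRingEnd ℂ) (s j)).re) ∂Γ)
    (hvanish : ∀ i j k : Fin d, ¬(i = j ∧ j = k) →
      ∀ θ, Dop i (Dop j (Dop k (fun θ' => ((φ θ' : ℝ) : ℂ)))) θ = 0) :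
    ∀ (i₀ : Fin d) (θ : Fin d → ℂ),
      ∫ s, s i₀ * cspow (∑ j, θ j * s j) (α - 1) ∂Γ
        = ∑ j, ∫ s, s i₀ * cspow (θ j * s j) (α - 1) ∂Γ :=
  stmt1_general d α Γ hsupp hsym φ hφ hvanish
end

section
/- Let 1 < p < 2. Then ∫_ℝ ∫_ℝ (1 − cos(x + y))/(x² + y²)^{(p+2)/2} dx dy = (Γ(1−p) · cos(pπ/2)/p) · ∫_0^{2π} (1 + sin(2θ))^{p/2} dθ. -/
/-!
In polar coordinates `(x, y) = (r cos θ, r sin θ)` the integrand, times the Jacobian `r`, becomes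
`(1 - cos ((cos θ + sin θ) r)) r^(-p-1)`. Rescaling `r` by `|cos θ + sin θ| = (1 + sin 2θ)^(1/2)`
splits the integral into the angular factor and `K = ∫₀^∞ (1 - cos r) r^(-p-1) dr`.

To evaluate `K`, write `Γ(p+1) r^(-p-1) = ∫₀^∞ t^p e^(-rt) dt` and swap the integrals: the Laplace
transform of `1 - cos` is `1 / (t (1 + t²))`, so `Γ(p+1) K = ∫₀^∞ t^(p-1) / (1 + t²) dt`. Writing
`1 / (1 + t²) = ∫₀^∞ e^(-(1+t²)s) ds` and swapping again gives `Γ(p/2) Γ(1-p/2) / 2` for the latter,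
and the reflection formula turns `K` into `Γ(1-p) cos(pπ/2) / p`.
-/

open MeasureTheory Real Set

section

variable {E : Type*} [NormedAddCommGroup E] [NormedSpace ℝ E]

theorem Function.Periodic.setIntegral_Ioo_eq_intervalIntegral {h : ℝ → E} {T : ℝ}
    (hh : Function.Periodic h T) (hT : 0 ≤ T) (a : ℝ) :
    ∫ x in Ioo a (a + T), h x = ∫ x in (0 : ℝ)..T, h x := by
  have hperiod := hh.intervalIntegral_add_eq a 0
  rw [zero_add] at hperiod
  rw [← hperiod, intervalIntegral.integral_of_le (by linarith), integral_Ioc_eq_integral_Ioo]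

theorem integrable_of_integrableOn_polarCoord_target {f : ℝ × ℝ → E}
    (hf : IntegrableOn (fun q => q.1 • f (polarCoord.symm q)) polarCoord.target) :
    Integrable f := by
  have key := integrableOn_image_iff_integrableOn_abs_det_fderiv_smul volume
    polarCoord.open_target.measurableSet
    (fun q _ => (hasFDerivAt_polarCoord_symm q).hasFDerivWithinAt)
    (polarCoord.symm_source ▸ polarCoord.symm.injOn) f
  rw [polarCoord.symm_image_target_eq_source] at key
  refine integrableOn_univ.1 ((key.2 ?_).congr_set_ae polarCoord_source_ae_eq_univ.symm)
  refine hf.congr_fun (fun q hq => ?_) polarCoord.open_target.measurableSet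
  rw [det_fderivPolarCoordSymm, abs_of_pos hq.1]

theorem integral_integral_eq_integral_polarCoord {f : ℝ × ℝ → E}
    (hf : IntegrableOn (fun q => q.1 • f (polarCoord.symm q)) polarCoord.target) :
    ∫ y, ∫ x, f (x, y) = ∫ θ in Ioo (-π) π, ∫ r in Ioi 0, r • f (polarCoord.symm (r, θ)) := by
  have hprod : (volume : Measure (ℝ × ℝ)).restrict polarCoord.target
      = (volume.restrict (Ioi 0)).prod (volume.restrict (Ioo (-π) π)) := by
    rw [polarCoord_target, Measure.volume_eq_prod, Measure.prod_restrict]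
  have hf' := integrable_of_integrableOn_polarCoord_target hf
  rw [Measure.volume_eq_prod] at hf'
  rw [← integral_prod_symm f hf', ← Measure.volume_eq_prod, ← integral_comp_polarCoord_symm,
    hprod, integral_prod_symm]
  rwa [IntegrableOn, hprod] at hf

end

theorem integral_integral_swap_of_nonneg {α β : Type*} [MeasurableSpace α] [MeasurableSpace β]
    {μ : Measure α} {ν : Measure β} [SFinite μ] [SFinite ν] {f : α → β → ℝ}
    (hf : AEStronglyMeasurable (Function.uncurry f) (μ.prod ν))
    (hf_nonneg : ∀ᵐ x ∂μ, ∀ᵐ y ∂ν, 0 ≤ f x y)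
    (hf_inner : ∀ᵐ x ∂μ, Integrable (f x) ν)
    (hf_outer : Integrable (fun x => ∫ y, f x y ∂ν) μ) :
    ∫ x, ∫ y, f x y ∂ν ∂μ = ∫ y, ∫ x, f x y ∂μ ∂ν := by
  refine integral_integral_swap ((integrable_prod_iff hf).2 ⟨hf_inner, hf_outer.congr ?_⟩)
  filter_upwards [hf_nonneg] with x hx
  exact integral_congr_ae (hx.mono fun y hy => (Real.norm_of_nonneg hy).symm)

lemma integral_exp_neg_mul_Ioi {c : ℝ} (hc : 0 < c) : ∫ r in Ioi 0, exp (-(c * r)) = 1 / c := by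
  simpa using integral_rpow_mul_exp_neg_mul_Ioi one_pos hc

lemma integral_one_sub_cos_mul_exp_neg_mul {c : ℝ} (hc : 0 < c) :
    ∫ r in Ioi 0, (1 - cos r) * exp (-(c * r)) = 1 / (c * (1 + c ^ 2)) := by
  have h1 : (-c : ℂ).re < 0 := by simpa using hc
  have h2 : (-c + Complex.I).re < 0 := by simpa using hc
  have hint1 := integrableOn_exp_mul_complex_Ioi h1 0
  have hint2 := integrableOn_exp_mul_complex_Ioi h2 0
  have hint : IntegrableOn
      (fun r : ℝ => Complex.exp (-c * r) - Complex.exp ((-c + Complex.I) * r)) (Ioi 0) :=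
    hint1.sub hint2
  have hnorm : Complex.normSq (-c + Complex.I) = 1 + c ^ 2 := by
    rw [← Complex.ofReal_neg, ← one_mul Complex.I, ← Complex.ofReal_one,
      Complex.normSq_add_mul_I]
    ring
  calc ∫ r in Ioi 0, (1 - cos r) * exp (-(c * r))
      = (∫ r : ℝ in Ioi 0, Complex.exp (-c * r) - Complex.exp ((-c + Complex.I) * r)).re := by
        rw [← RCLike.re_to_complex, ← integral_re hint]
        refine setIntegral_congr_fun measurableSet_Ioi fun r _ => ?_
        simp [Complex.exp_re, sub_mul, mul_comm]
    _ = c⁻¹ - c / (1 + c ^ 2) := by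
        rw [integral_sub hint1 hint2, integral_exp_mul_complex_Ioi h1,
          integral_exp_mul_complex_Ioi h2]
        simp [Complex.div_re, hnorm]
    _ = 1 / (c * (1 + c ^ 2)) := by
        field_simp
        ring

lemma one_sub_cos_le_two_mul_min_sq_one (x : ℝ) : 1 - cos x ≤ 2 * min (x ^ 2) 1 := by
  rcases le_total (x ^ 2) 1 with h | h
  · rw [min_eq_left h]; nlinarith [one_sub_sq_div_two_le_cos (x := x), sq_nonneg x]
  · rw [min_eq_right h]; linarith [neg_one_le_cos x]

lemma integrableOn_min_sq_one_mul_rpow {p : ℝ} (hp0 : 0 < p) (hp2 : p < 2) :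
    IntegrableOn (fun r : ℝ => min (r ^ 2) 1 * r ^ (-(p + 1))) (Ioi 0) := by
  rw [← Ioc_union_Ioi_eq_Ioi zero_le_one, integrableOn_union]
  constructor
  · have h := intervalIntegral.intervalIntegrable_rpow' (a := 0) (b := 1) (r := 1 - p)
      (by linarith)
    rw [intervalIntegrable_iff_integrableOn_Ioc_of_le zero_le_one] at h
    refine h.congr_fun (fun r hr => ?_) measurableSet_Ioc
    have hr2 : r ^ 2 ≤ 1 := by nlinarith [hr.1, hr.2]
    rw [min_eq_left hr2, ← rpow_natCast, ← rpow_add hr.1]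
    ring_nf
  · refine (integrableOn_Ioi_rpow_of_lt (a := -(p + 1)) (by linarith) one_pos).congr_fun
      (fun r hr => ?_) measurableSet_Ioi
    have hr2 : 1 ≤ r ^ 2 := by nlinarith [mem_Ioi.1 hr]
    rw [min_eq_right hr2, one_mul]

lemma integrableOn_one_sub_cos_mul_rpow {p : ℝ} (hp0 : 0 < p) (hp2 : p < 2) :
    IntegrableOn (fun r : ℝ => (1 - cos r) * r ^ (-(p + 1))) (Ioi 0) := by
  refine Integrable.mono' ((integrableOn_min_sq_one_mul_rpow hp0 hp2).const_mul 2)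
    ((by fun_prop : Measurable fun r : ℝ => (1 - cos r) * r ^ (-(p + 1))).aestronglyMeasurable)
    (ae_restrict_of_forall_mem measurableSet_Ioi fun r hr => ?_)
  have hr0 : 0 ≤ r ^ (-(p + 1)) := rpow_nonneg (le_of_lt hr) _
  rw [norm_of_nonneg (mul_nonneg (by linarith [cos_le_one r]) hr0), ← mul_assoc]
  exact mul_le_mul_of_nonneg_right (one_sub_cos_le_two_mul_min_sq_one r) hr0

theorem Gamma_add_one_mul_integral_one_sub_cos_mul_rpow {p : ℝ} (hp0 : 0 < p) (hp2 : p < 2) :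
    Gamma (p + 1) * ∫ r in Ioi 0, (1 - cos r) * r ^ (-(p + 1))
      = ∫ t in Ioi 0, t ^ (p - 1) / (1 + t ^ 2) := by
  set W : ℝ → ℝ → ℝ := fun r t => (1 - cos r) * (t ^ p * exp (-(r * t)))
  have hW_t : ∀ r ∈ Ioi (0 : ℝ),
      ∫ t in Ioi 0, W r t = Gamma (p + 1) * ((1 - cos r) * r ^ (-(p + 1))) := by
    intro r hr
    have := integral_rpow_mul_exp_neg_mul_Ioi (a := p + 1) (by linarith) hr
    rw [add_sub_cancel_right, one_div, inv_rpow (le_of_lt hr), ← rpow_neg (le_of_lt hr)] at this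
    rw [integral_const_mul, this]
    ring
  have hW_r : ∀ t ∈ Ioi (0 : ℝ), ∫ r in Ioi 0, W r t = t ^ (p - 1) / (1 + t ^ 2) := by
    intro t ht
    simp_rw [W, mul_left_comm (1 - cos _), mul_comm _ t]
    rw [integral_const_mul, integral_one_sub_cos_mul_exp_neg_mul ht, rpow_sub_one (ne_of_gt ht)]
    field_simp
  calc Gamma (p + 1) * ∫ r in Ioi 0, (1 - cos r) * r ^ (-(p + 1))
      = ∫ r in Ioi 0, ∫ t in Ioi 0, W r t := by
        rw [← integral_const_mul]
        exact (setIntegral_congr_fun measurableSet_Ioi hW_t).symm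
    _ = ∫ t in Ioi 0, ∫ r in Ioi 0, W r t := by
        refine integral_integral_swap_of_nonneg
          (Measurable.aestronglyMeasurable (by fun_prop)) ?_ ?_ ?_
        · filter_upwards [ae_restrict_mem measurableSet_Ioi] with r hr
          filter_upwards [ae_restrict_mem measurableSet_Ioi] with t ht
          have := rpow_pos_of_pos ht p
          have := cos_le_one r
          positivity
        · filter_upwards [ae_restrict_mem measurableSet_Ioi] with r hr
          simpa [W] using ((integrableOn_rpow_mul_exp_neg_mul_rpow (s := p) (by linarith)
            one_pos hr).const_mul (1 - cos r))
        · exact ((integrableOn_one_sub_cos_mul_rpow hp0 hp2).const_mul (Gamma (p + 1))).congr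
            ((ae_restrict_mem measurableSet_Ioi).mono fun r hr => (hW_t r hr).symm)
    _ = ∫ t in Ioi 0, t ^ (p - 1) / (1 + t ^ 2) := setIntegral_congr_fun measurableSet_Ioi hW_r

theorem integral_rpow_div_one_add_sq {p : ℝ} (hp0 : 0 < p) (hp2 : p < 2) :
    ∫ t in Ioi 0, t ^ (p - 1) / (1 + t ^ 2) = Gamma (p / 2) * Gamma (1 - p / 2) / 2 := by
  set V : ℝ → ℝ → ℝ := fun s t => t ^ (p - 1) * exp (-((1 + t ^ 2) * s))
  have hV_split : ∀ s t, V s t = t ^ (p - 1) * exp (-s * t ^ (2 : ℝ)) * exp (-s) := by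
    intro s t
    simp only [V, rpow_two, mul_assoc, ← exp_add]
    ring_nf
  have hV_t : ∀ s ∈ Ioi (0 : ℝ),
      ∫ t in Ioi 0, V s t = Gamma (p / 2) / 2 * (s ^ ((1 - p / 2) - 1) * exp (-(1 * s))) := by
    intro s hs
    simp_rw [hV_split]
    rw [integral_mul_const, integral_rpow_mul_exp_neg_mul_rpow two_pos (by linarith) hs]
    ring_nf
  have hV_s : ∀ t ∈ Ioi (0 : ℝ), ∫ s in Ioi 0, V s t = t ^ (p - 1) / (1 + t ^ 2) := by
    intro t _
    rw [integral_const_mul, integral_exp_neg_mul_Ioi (by positivity), mul_one_div]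
  calc ∫ t in Ioi 0, t ^ (p - 1) / (1 + t ^ 2)
      = ∫ t in Ioi 0, ∫ s in Ioi 0, V s t := (setIntegral_congr_fun measurableSet_Ioi hV_s).symm
    _ = ∫ s in Ioi 0, ∫ t in Ioi 0, V s t := by
        refine (integral_integral_swap_of_nonneg
          (Measurable.aestronglyMeasurable (by fun_prop)) ?_ ?_ ?_).symm
        · filter_upwards [ae_restrict_mem measurableSet_Ioi] with s hs
          filter_upwards [ae_restrict_mem measurableSet_Ioi] with t ht
          have := rpow_pos_of_pos ht (p - 1)
          positivity
        · filter_upwards [ae_restrict_mem measurableSet_Ioi] with s hs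
          have h := (integrableOn_rpow_mul_exp_neg_mul_rpow (s := p - 1) (by linarith) two_pos
            hs).mul_const (exp (-s))
          exact IntegrableOn.congr_fun h (fun t _ => (hV_split s t).symm) measurableSet_Ioi
        · refine (((GammaIntegral_convergent (s := 1 - p / 2) (by linarith)).const_mul
            (Gamma (p / 2) / 2)).congr ?_)
          filter_upwards [ae_restrict_mem measurableSet_Ioi] with s hs
          rw [hV_t s hs, one_mul, mul_comm (exp _)]
    _ = Gamma (p / 2) * Gamma (1 - p / 2) / 2 := by
        rw [setIntegral_congr_fun measurableSet_Ioi hV_t, integral_const_mul,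
          integral_rpow_mul_exp_neg_mul_Ioi (by linarith) one_pos, div_one, one_rpow]
        ring

theorem integral_one_sub_cos_mul_rpow {p : ℝ} (hp0 : 0 < p) (hp2 : p < 2) (hp1 : p ≠ 1) :
    ∫ r in Ioi 0, (1 - cos r) * r ^ (-(p + 1)) = Gamma (1 - p) * cos (p * π / 2) / p := by
  have hsin : sin (π * p) ≠ 0 := by
    rw [show π * p = π * (p - 1) + π by ring, sin_add_pi, neg_ne_zero]
    intro h
    rw [sin_eq_zero_iff_of_lt_of_lt (by nlinarith [pi_pos]) (by nlinarith [pi_pos])] at h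
    exact hp1 (by nlinarith [pi_pos])
  have hsin_double : sin (π * p) = 2 * sin (π * p / 2) * cos (π * p / 2) := by
    rw [← sin_two_mul]; ring_nf
  have hcos : cos (π * p / 2) ≠ 0 := fun h => hsin (by rw [hsin_double, h, mul_zero])
  have hΓ : Gamma p ≠ 0 := (Gamma_pos_of_pos hp0).ne'
  have hΓ_refl : Gamma (1 - p) = π / (sin (π * p) * Gamma p) := by
    rw [eq_div_iff (mul_ne_zero hsin hΓ), ← mul_assoc, mul_comm _ (sin _), mul_assoc,
      mul_comm (Gamma _), Gamma_mul_Gamma_one_sub, mul_div_cancel₀ _ hsin]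
  have hK : ∫ r in Ioi 0, (1 - cos r) * r ^ (-(p + 1))
      = Gamma (p / 2) * Gamma (1 - p / 2) / 2 / Gamma (p + 1) := by
    rw [eq_div_iff (Gamma_pos_of_pos (by linarith)).ne', mul_comm,
      Gamma_add_one_mul_integral_one_sub_cos_mul_rpow hp0 hp2, integral_rpow_div_one_add_sq hp0 hp2]
  rw [hK, Gamma_add_one hp0.ne', Gamma_mul_Gamma_one_sub, hΓ_refl, hsin_double, ← mul_div_assoc,
    mul_comm p π]
  field_simp

lemma integral_one_sub_cos_mul_rpow_comp_mul_left {p : ℝ} (hp : p ≠ 0) (a : ℝ) :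
    ∫ r in Ioi 0, (1 - cos (a * r)) * r ^ (-(p + 1))
      = |a| ^ p * ∫ r in Ioi 0, (1 - cos r) * r ^ (-(p + 1)) := by
  rcases eq_or_ne a 0 with rfl | ha
  · simp [zero_rpow hp]
  have ha' : 0 < |a| := abs_pos.2 ha
  have hscale : ∀ r ∈ Ioi (0 : ℝ), (1 - cos (a * r)) * r ^ (-(p + 1))
      = |a| ^ (p + 1) * ((1 - cos (|a| * r)) * (|a| * r) ^ (-(p + 1))) := by
    intro r hr
    have hr : 0 < r := hr
    rw [show |a| * r = |a * r| by rw [abs_mul, abs_of_pos hr], cos_abs, abs_mul, abs_of_pos hr,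
      mul_rpow ha'.le hr.le, rpow_neg ha'.le]
    field_simp
  rw [setIntegral_congr_fun measurableSet_Ioi hscale, integral_const_mul,
    integral_comp_mul_left_Ioi (fun r => (1 - cos r) * r ^ (-(p + 1))) 0 ha', mul_zero,
    smul_eq_mul, ← mul_assoc, ← rpow_neg_one, ← rpow_add ha']
  ring_nf

lemma abs_cos_add_sin_rpow (θ p : ℝ) : |cos θ + sin θ| ^ p = (1 + sin (2 * θ)) ^ (p / 2) := by
  have hsq : (cos θ + sin θ) ^ 2 = 1 + sin (2 * θ) := by
    rw [sin_two_mul]; nlinarith [sin_sq_add_cos_sq θ]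
  rw [← hsq, ← sq_abs, ← rpow_natCast, ← rpow_mul (abs_nonneg _), Nat.cast_ofNat,
    mul_div_cancel₀ _ two_ne_zero]

lemma mul_one_sub_cos_div_rpow_polar (p θ : ℝ) {r : ℝ} (hr : 0 < r) :
    r * ((1 - cos (r * cos θ + r * sin θ)) / ((r * cos θ) ^ 2 + (r * sin θ) ^ 2) ^ ((p + 2) / 2))
      = (1 - cos ((cos θ + sin θ) * r)) * r ^ (-(p + 1)) := by
  have hnorm : (r * cos θ) ^ 2 + (r * sin θ) ^ 2 = r ^ (2 : ℝ) := by
    rw [rpow_two]; nlinarith [sin_sq_add_cos_sq θ]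
  rw [hnorm, ← rpow_mul hr.le, div_eq_mul_inv, ← rpow_neg hr.le]
  nth_rewrite 1 [← rpow_one r]
  rw [mul_left_comm, ← rpow_add hr]
  ring_nf

lemma integrableOn_one_sub_cos_cos_add_sin_mul_rpow {p : ℝ} (hp0 : 0 < p) (hp2 : p < 2) :
    IntegrableOn (fun q : ℝ × ℝ => (1 - cos ((cos q.2 + sin q.2) * q.1)) * q.1 ^ (-(p + 1)))
      (Ioi 0 ×ˢ Ioo (-π) π) := by
  have hbound : IntegrableOn (fun q : ℝ × ℝ => 4 * (min (q.1 ^ 2) 1 * q.1 ^ (-(p + 1))))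
      (Ioi 0 ×ˢ Ioo (-π) π) := by
    rw [IntegrableOn, Measure.volume_eq_prod, ← Measure.prod_restrict]
    exact ((integrableOn_min_sq_one_mul_rpow hp0 hp2).const_mul 4).comp_fst _
  refine hbound.mono' (Measurable.aestronglyMeasurable (by fun_prop))
    (ae_restrict_of_forall_mem (measurableSet_Ioi.prod measurableSet_Ioo) fun q hq => ?_)
  have hr : 0 ≤ q.1 ^ (-(p + 1)) := rpow_nonneg (le_of_lt hq.1) _
  have hsq : (cos q.2 + sin q.2) ^ 2 ≤ 2 := by
    nlinarith [sin_sq_add_cos_sq q.2, sq_nonneg (cos q.2 - sin q.2)]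
  have hmin : min (((cos q.2 + sin q.2) * q.1) ^ 2) 1 ≤ 2 * min (q.1 ^ 2) 1 := by
    rcases le_total (q.1 ^ 2) 1 with h | h
    · rw [min_eq_left h, mul_pow]
      exact (min_le_left _ _).trans (mul_le_mul_of_nonneg_right hsq (sq_nonneg _))
    · rw [min_eq_right h]; exact (min_le_right _ _).trans (by norm_num)
  rw [norm_of_nonneg (mul_nonneg (by linarith [cos_le_one ((cos q.2 + sin q.2) * q.1)]) hr)]
  calc (1 - cos ((cos q.2 + sin q.2) * q.1)) * q.1 ^ (-(p + 1))
      ≤ 2 * min (((cos q.2 + sin q.2) * q.1) ^ 2) 1 * q.1 ^ (-(p + 1)) :=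
        mul_le_mul_of_nonneg_right (one_sub_cos_le_two_mul_min_sq_one _) hr
    _ ≤ 4 * (min (q.1 ^ 2) 1 * q.1 ^ (-(p + 1))) := by
        linarith [mul_le_mul_of_nonneg_right hmin hr]

theorem stmt8 (p : ℝ) (hp1 : 1 < p) (hp2 : p < 2) :
    ∫ y : ℝ, ∫ x : ℝ, (1 - Real.cos (x + y)) / (x ^ 2 + y ^ 2) ^ ((p + 2) / 2)
      = (Real.Gamma (1 - p) * Real.cos (p * π / 2) / p) *
        ∫ θ in (0 : ℝ)..(2 * π), (1 + Real.sin (2 * θ)) ^ (p / 2) := by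
  set G : ℝ × ℝ → ℝ := fun q => (1 - cos (q.1 + q.2)) / (q.1 ^ 2 + q.2 ^ 2) ^ ((p + 2) / 2)
  have hpolar : ∀ θ r, 0 < r → r • G (polarCoord.symm (r, θ))
      = (1 - cos ((cos θ + sin θ) * r)) * r ^ (-(p + 1)) :=
    fun θ r hr => mul_one_sub_cos_div_rpow_polar p θ hr
  have hperiodic : Function.Periodic (fun θ => (1 + sin (2 * θ)) ^ (p / 2)) (2 * π) := by
    intro θ
    simp only [mul_add, show 2 * (2 * π) = 2 * π + 2 * π by ring, ← add_assoc, sin_add_two_pi]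
  calc ∫ y, ∫ x, G (x, y)
      = ∫ θ in Ioo (-π) π, ∫ r in Ioi 0, r • G (polarCoord.symm (r, θ)) :=
        integral_integral_eq_integral_polarCoord
          ((integrableOn_one_sub_cos_cos_add_sin_mul_rpow (by linarith) hp2).congr_fun
            (fun q hq => (hpolar q.2 q.1 hq.1).symm) polarCoord.open_target.measurableSet)
    _ = ∫ θ in Ioo (-π) π, (1 + sin (2 * θ)) ^ (p / 2) *
          ∫ r in Ioi 0, (1 - cos r) * r ^ (-(p + 1)) := by
        refine setIntegral_congr_fun measurableSet_Ioo fun θ _ => ?_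
        rw [setIntegral_congr_fun measurableSet_Ioi fun r hr => hpolar θ r hr,
          integral_one_sub_cos_mul_rpow_comp_mul_left (by linarith), abs_cos_add_sin_rpow]
    _ = _ := by
        have hperiod := hperiodic.setIntegral_Ioo_eq_intervalIntegral (by positivity) (-π)
        rw [show -π + 2 * π = π by ring] at hperiod
        rw [integral_mul_const, hperiod,
          integral_one_sub_cos_mul_rpow (by linarith) hp2 (by linarith), mul_comm]
end

section
/- Let d ≥ 2, let Γ be a finite Borel measure on the unit sphere S_d of ℝ^d, fix i₀ ∈ {1,…,d} and m with 2 ≤ m ≤ d, and define Δ : ℝ^m → ℝ by Δ(θ₁,…,θ_m) = ∫_{S_d} s_{i₀} · sin(θ_m s_m/2) · sin((θ₁s₁ + … + θ_{m−1}s_{m−1})/2) · sin((θ₁s₁ + … + θ_m s_m)/2) dΓ(s). If for every k ∈ {1,…,m−1} the mixed partial derivative ∂²Δ/∂θ_k∂θ_m vanishes identically on ℝ^m, then Δ vanishes identically on ℝ^m. -/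
/-!
By product-to-sum, the integrand of `Δ` is `s i₀ / 4 * (sin a + sin b - sin (a + b))` with
`a = ∑_{j < m} θ_j s_j` and `b = θ_m s_m`. Differentiating under the integral,
`G = ∂Δ/∂θ_m` integrates `s i₀ * s_m / 4 * (cos b - cos (a + b))`. The hypothesis makes `G`
independent of `θ_1, …, θ_{m-1}`, and its integrand vanishes when these are all zero, so `G = 0`.
Hence `Δ` does not depend on `θ_m`, and its integrand vanishes at `θ_m = 0`.
-/

open MeasureTheory Real

/-- Partial derivative of `f : ℝ^m → ℝ` in the `i`-th coordinate direction. -/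
noncomputable def pderiv' {m : ℕ} (i : Fin m) (f : (Fin m → ℝ) → ℝ) : (Fin m → ℝ) → ℝ :=
  fun θ => deriv (fun t : ℝ => f (Function.update θ i t)) (θ i)

open Function Matrix

theorem sin_half_mul_sin_sub_half_mul_sin_half (x y : ℝ) :
    sin (y / 2) * sin ((x - y) / 2) * sin (x / 2) = (sin (x - y) + sin y - sin x) / 4 := by
  obtain ⟨u, rfl⟩ : ∃ u, x = 2 * u + y := ⟨(x - y) / 2, by ring⟩
  obtain ⟨v, rfl⟩ : ∃ v, y = 2 * v := ⟨y / 2, by ring⟩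
  rw [show 2 * u + 2 * v - 2 * v = 2 * u by ring, show 2 * u + 2 * v = 2 * (u + v) by ring]
  simp only [mul_div_cancel_left₀ _ (two_ne_zero' ℝ), sin_two_mul, sin_add, cos_add]
  linear_combination
    sin u * cos u / 2 * sin_sq_add_cos_sq v + sin v * cos v / 2 * sin_sq_add_cos_sq u

theorem Continuous.integrable_of_measure_compl_eq_zero {X : Type*} [TopologicalSpace X]
    [T2Space X] [MeasurableSpace X] [OpensMeasurableSpace X] {μ : Measure X}
    [IsFiniteMeasureOnCompacts μ] {K : Set X} (hK : IsCompact K) (hμ : μ Kᶜ = 0) {f : X → ℝ}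
    (hf : Continuous f) : Integrable f μ := by
  simpa [IntegrableOn, Measure.restrict_eq_self_of_ae_mem (mem_ae_iff.2 hμ)] using
    hf.continuousOn.integrableOn_compact (μ := μ) hK

section PartialDeriv

variable {ι : Type*} [DecidableEq ι]

def HasPartialDeriv (i : ι) (f f' : (ι → ℝ) → ℝ) : Prop :=
  ∀ θ, HasDerivAt (fun t => f (update θ i t)) (f' θ) (θ i)

theorem hasPartialDeriv_apply (i j : ι) :
    HasPartialDeriv i (fun θ => θ j) (fun _ => (Pi.single i 1 : ι → ℝ) j) := fun θ =>
  hasDerivAt_pi.1 (hasDerivAt_update θ i (θ i)) j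

theorem hasPartialDeriv_dotProduct [Fintype ι] (i : ι) (c : ι → ℝ) :
    HasPartialDeriv i (· ⬝ᵥ c) (fun _ => c i) := fun θ => by
  simpa [dotProduct, Pi.single_apply] using
    HasDerivAt.fun_sum (u := Finset.univ) fun j _ => (hasPartialDeriv_apply i j θ).mul_const (c j)

theorem eq_of_forall_update_eq {α β : Type*} {f : (ι → α) → β} (s : Finset ι)
    (hf : ∀ i ∈ s, ∀ θ t, f (update θ i t) = f θ) {θ θ' : ι → α}
    (h : ∀ i ∉ s, θ i = θ' i) : f θ = f θ' := by
  induction s using Finset.induction_on generalizing θ with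
  | empty => exact congrArg f (funext fun i => h i (Finset.notMem_empty i))
  | insert i s _ ih =>
    rw [← hf i (Finset.mem_insert_self i s) θ (θ' i)]
    refine ih (fun j hj => hf j (Finset.mem_insert_of_mem hj)) fun j hj => ?_
    rcases eq_or_ne j i with rfl | hji
    · simp
    · rw [update_of_ne hji]; exact h j (by simp [hji, hj])

theorem apply_eq_apply_single_of_forall_update_eq [Fintype ι] {β : Type*} {f : (ι → ℝ) → β}
    (i : ι) (hf : ∀ j ≠ i, ∀ θ t, f (update θ j t) = f θ) (θ : ι → ℝ) :
    f θ = f (Pi.single i (θ i)) :=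
  eq_of_forall_update_eq (Finset.univ.erase i) (fun j hj => hf j (Finset.ne_of_mem_erase hj))
    fun j hj => by
      obtain rfl : j = i := by simpa using hj
      simp

namespace HasPartialDeriv

variable {i : ι} {f f' : (ι → ℝ) → ℝ}

theorem hasDerivAt (h : HasPartialDeriv i f f') (θ : ι → ℝ) (t : ℝ) :
    HasDerivAt (fun u => f (update θ i u)) (f' (update θ i t)) t := by
  simpa using h (update θ i t)

theorem update_eq (h : HasPartialDeriv i f f') (h0 : ∀ θ, f' θ = 0) (θ : ι → ℝ) (t : ℝ) :
    f (update θ i t) = f θ := by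
  have hconst := is_const_of_deriv_eq_zero (fun u => (h.hasDerivAt θ u).differentiableAt)
    (fun u => by rw [(h.hasDerivAt θ u).deriv, h0]) t (θ i)
  simpa using hconst

theorem pderiv'_eq {m : ℕ} {i : Fin m} {f f' : (Fin m → ℝ) → ℝ} (h : HasPartialDeriv i f f') :
    pderiv' i f = f' :=
  funext fun θ => (h θ).deriv

theorem integral {α : Type*} [MeasurableSpace α] {μ : Measure α} {F F' : (ι → ℝ) → α → ℝ}
    {bound : α → ℝ} (hF : ∀ θ, Integrable (F θ) μ) (hF' : ∀ θ, AEStronglyMeasurable (F' θ) μ)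
    (hbound : Integrable bound μ) (hle : ∀ θ a, |F' θ a| ≤ bound a)
    (hderiv : ∀ a, HasPartialDeriv i (F · a) (F' · a)) :
    HasPartialDeriv i (fun θ => ∫ a, F θ a ∂μ) (fun θ => ∫ a, F' θ a ∂μ) := fun θ => by
  simpa using (hasDerivAt_integral_of_dominated_loc_of_deriv_le (x₀ := θ i)
    (F := fun t a => F (update θ i t) a) (F' := fun t a => F' (update θ i t) a)
    Filter.univ_mem (.of_forall fun t => (hF _).aestronglyMeasurable) (hF _) (hF' _)
    (.of_forall fun a t _ => hle _ a) hbound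
    (.of_forall fun a t _ => (hderiv a).hasDerivAt θ t)).2

end HasPartialDeriv

end PartialDeriv

section DeltaIntegrand

variable {ι : Type*} [Fintype ι] (w : ℝ) (c : ι → ℝ) (i : ι)

noncomputable def deltaIntegrand (θ : ι → ℝ) : ℝ :=
  w / 4 * (sin (θ ⬝ᵥ c - θ i * c i) + sin (θ i * c i) - sin (θ ⬝ᵥ c))

noncomputable def deltaIntegrandDeriv (θ : ι → ℝ) : ℝ :=
  w * c i / 4 * (cos (θ i * c i) - cos (θ ⬝ᵥ c))

theorem abs_deltaIntegrandDeriv_le (θ : ι → ℝ) : |deltaIntegrandDeriv w c i θ| ≤ |w * c i| / 2 := by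
  rw [deltaIntegrandDeriv, abs_mul, abs_div, abs_of_pos (four_pos : (0 : ℝ) < 4)]
  have := (abs_sub _ _).trans (add_le_add (abs_cos_le_one (θ i * c i)) (abs_cos_le_one (θ ⬝ᵥ c)))
  nlinarith [abs_nonneg (w * c i)]

variable [DecidableEq ι]

theorem hasPartialDeriv_deltaIntegrand :
    HasPartialDeriv i (deltaIntegrand w c i) (deltaIntegrandDeriv w c i) := fun θ => by
  have hdot := hasPartialDeriv_dotProduct i c θ
  have hlast := (hasPartialDeriv_apply i i θ).mul_const (c i)
  simp only [Pi.single_eq_same, one_mul] at hlast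
  refine ((((hdot.fun_sub hlast).sin.fun_add hlast.sin).fun_sub hdot.sin).const_mul
    (w / 4)).congr_deriv ?_
  simp only [update_eq_self, deltaIntegrandDeriv]
  ring

theorem hasPartialDeriv_deltaIntegrandDeriv {j : ι} (hji : j ≠ i) :
    HasPartialDeriv j (deltaIntegrandDeriv w c i) (fun θ => w * c i * c j / 4 * sin (θ ⬝ᵥ c)) :=
    fun θ => by
  have hdot := hasPartialDeriv_dotProduct j c θ
  have hlast := (hasPartialDeriv_apply j i θ).mul_const (c i)
  simp only [Pi.single_eq_of_ne hji.symm, zero_mul] at hlast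
  refine ((hlast.cos.fun_sub hdot.cos).const_mul (w * c i / 4)).congr_deriv ?_
  simp only [update_eq_self]
  ring

theorem deltaIntegrandDeriv_single (t : ℝ) : deltaIntegrandDeriv w c i (Pi.single i t) = 0 := by
  simp [deltaIntegrandDeriv, single_dotProduct]

theorem deltaIntegrand_update_self_zero (θ : ι → ℝ) : deltaIntegrand w c i (update θ i 0) = 0 := by
  simp [deltaIntegrand]

theorem mul_sin_mul_sin_mul_sin_eq_deltaIntegrand {n : ℕ} (w : ℝ) (c θ : Fin (n + 2) → ℝ) :
    w * sin (θ (Fin.last (n + 1)) * c (Fin.last (n + 1)) / 2) *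
      sin ((∑ j : Fin (n + 1), θ j.castSucc * c j.castSucc) / 2) *
      sin ((∑ j : Fin (n + 2), θ j * c j) / 2) = deltaIntegrand w c (Fin.last (n + 1)) θ := by
  rw [eq_sub_of_add_eq (Fin.sum_univ_castSucc fun j => θ j * c j).symm, mul_assoc w, mul_assoc w,
    ← dotProduct, sin_half_mul_sin_sub_half_mul_sin_half, deltaIntegrand]
  ring

end DeltaIntegrand

section Integral

variable {ι X : Type*} [Fintype ι] [DecidableEq ι] [TopologicalSpace X] [MeasurableSpace X]
  {μ : Measure X} {w : X → ℝ} {c : X → ι → ℝ}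

theorem hasPartialDeriv_integral_deltaIntegrand
    (hμ : ∀ φ : X → ℝ, Continuous φ → Integrable φ μ) (hw : Continuous w) (hc : Continuous c)
    (i : ι) :
    HasPartialDeriv i (fun θ => ∫ x, deltaIntegrand (w x) (c x) i θ ∂μ)
      (fun θ => ∫ x, deltaIntegrandDeriv (w x) (c x) i θ ∂μ) :=
  HasPartialDeriv.integral (fun θ => hμ _ (by unfold deltaIntegrand dotProduct; fun_prop))
    (fun θ => (hμ _ (by unfold deltaIntegrandDeriv dotProduct; fun_prop)).aestronglyMeasurable)
    (hμ _ (by fun_prop)) (fun θ x => abs_deltaIntegrandDeriv_le _ _ _ θ)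
    (fun x => hasPartialDeriv_deltaIntegrand _ _ _)

theorem hasPartialDeriv_integral_deltaIntegrandDeriv
    (hμ : ∀ φ : X → ℝ, Continuous φ → Integrable φ μ) (hw : Continuous w) (hc : Continuous c)
    {i j : ι} (hji : j ≠ i) :
    HasPartialDeriv j (fun θ => ∫ x, deltaIntegrandDeriv (w x) (c x) i θ ∂μ)
      (fun θ => ∫ x, w x * c x i * c x j / 4 * sin (θ ⬝ᵥ c x) ∂μ) :=
  HasPartialDeriv.integral (fun θ => hμ _ (by unfold deltaIntegrandDeriv dotProduct; fun_prop))
    (fun θ => (hμ _ (by unfold dotProduct; fun_prop)).aestronglyMeasurable)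
    (bound := fun x => |w x * c x i * c x j| / 4) (hμ _ (by fun_prop))
    (fun θ x => by
      rw [abs_mul, abs_div, abs_of_pos (four_pos : (0 : ℝ) < 4)]
      exact mul_le_of_le_one_right (by positivity) (abs_sin_le_one _))
    (fun x => hasPartialDeriv_deltaIntegrandDeriv _ _ _ hji)

end Integral

/-- Statement 14, with `m = n + 2` (so that `2 ≤ m ≤ d`). -/
theorem stmt14 (d n : ℕ) (hmd : n + 2 ≤ d)
    (Γ : Measure (EuclideanSpace ℝ (Fin d))) [IsFiniteMeasure Γ]
    (hsupp : Γ {s : EuclideanSpace ℝ (Fin d) | ‖s‖ = 1}ᶜ = 0)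
    (i₀ : Fin d)
    (Δ : (Fin (n + 2) → ℝ) → ℝ)
    (hΔ : ∀ θ : Fin (n + 2) → ℝ, Δ θ =
      ∫ s, s i₀ *
        Real.sin (θ (Fin.last (n + 1)) * s (Fin.castLE hmd (Fin.last (n + 1))) / 2) *
        Real.sin ((∑ j : Fin (n + 1), θ j.castSucc * s (Fin.castLE hmd j.castSucc)) / 2) *
        Real.sin ((∑ j : Fin (n + 2), θ j * s (Fin.castLE hmd j)) / 2) ∂Γ)
    (hmix : ∀ (k : Fin (n + 1)) (θ : Fin (n + 2) → ℝ),
      pderiv' k.castSucc (pderiv' (Fin.last (n + 1)) Δ) θ = 0) :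
    ∀ θ : Fin (n + 2) → ℝ, Δ θ = 0 := by
  set m := Fin.last (n + 1)
  set c : EuclideanSpace ℝ (Fin d) → Fin (n + 2) → ℝ := fun s j => s (Fin.castLE hmd j)
  have hsphere : IsCompact {s : EuclideanSpace ℝ (Fin d) | ‖s‖ = 1} := by
    simpa [Metric.sphere] using isCompact_sphere (0 : EuclideanSpace ℝ (Fin d)) 1
  have hint (φ : EuclideanSpace ℝ (Fin d) → ℝ) (hφ : Continuous φ) : Integrable φ Γ :=
    hφ.integrable_of_measure_compl_eq_zero hsphere hsupp
  have hc : Continuous c := by fun_prop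
  have hΔ' : Δ = fun θ => ∫ s, deltaIntegrand (s i₀) (c s) m θ ∂Γ := funext fun θ => by
    rw [hΔ]
    congr 1 with s
    exact mul_sin_mul_sin_mul_sin_eq_deltaIntegrand (s i₀) (c s) θ
  set G := fun θ => ∫ s, deltaIntegrandDeriv (s i₀) (c s) m θ ∂Γ
  have hΔG : HasPartialDeriv m Δ G :=
    hΔ' ▸ hasPartialDeriv_integral_deltaIntegrand hint (by fun_prop) hc m
  have hGH (k : Fin (n + 1)) := hasPartialDeriv_integral_deltaIntegrandDeriv hint
    (w := fun s => s i₀) (by fun_prop) hc (Fin.castSucc_lt_last k).ne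
  have hG_update (k : Fin (n + 1)) : ∀ θ t, G (update θ k.castSucc t) = G θ :=
    (hGH k).update_eq fun θ => by
      have h := hmix k θ
      rwa [hΔG.pderiv'_eq, (hGH k).pderiv'_eq] at h
  have hG (θ : Fin (n + 2) → ℝ) : G θ = 0 := by
    rw [apply_eq_apply_single_of_forall_update_eq (f := G) m fun j hj => ?_]
    · simp [G, deltaIntegrandDeriv_single]
    · obtain ⟨k, rfl⟩ := Fin.exists_castSucc_eq.2 hj
      exact hG_update k
  intro θ
  rw [← hΔG.update_eq hG θ 0, hΔ']
  simp [deltaIntegrand_update_self_zero]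
end
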